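/- arXiv:2306.12397 — 3 statements merged into one kernel-verified Lean document; each statement's English description precedes it below -/
import Mathlib

section
/- For every natural number n and all y > 0, the Bessel function of half-integer order satisfies Lord Rayleigh's formula: J_{n+1/2}(y) = (-1)^n √(2/π) · y^{n+1/2} · ((1/y) d/dy)^n (sin(y)/y). -/
open MeasureTheory Real Set

/-- The Bessel function of the first kind of order `α`, defined for `α > -1/2` via the
Poisson integral representation
`J_α(y) = (y/2)^α (Γ(α+1/2)Γ(1/2))⁻¹ ∫_{-1}^1 e^{iys} (1-s²)^{α-1/2} ds`. -/
noncomputable def besselJ (α : ℝ) (y : ℝ) : ℂ :=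
  (((y / 2) ^ α / (Real.Gamma (α + 1 / 2) * Real.Gamma (1 / 2)) : ℝ) : ℂ) *
    ∫ s in Set.Ioo (-1 : ℝ) 1,
      Complex.exp (Complex.I * (y : ℂ) * (s : ℂ)) * (((1 - s ^ 2) ^ (α - 1 / 2) : ℝ) : ℂ)

/-- The operator `f ↦ (1/y) d/dy f` iterated `n` times. -/
noncomputable def rayleighOp : ℕ → (ℝ → ℝ) → (ℝ → ℝ)
  | 0, f => f
  | n + 1, f => fun y => deriv (rayleighOp n f) y / y

open Topology

/-!
For `α = n + 1/2` the Poisson weight `(1 - s²)^(α - 1/2)` is the polynomial `(1 - s²)^n`, and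
the odd part `sin (y s)` of `e^{iys}` integrates to zero, so `J_{n+1/2}(y)` is a multiple of
`y^(n+1/2) P_n(y)` with `P_n(y) = ∫_{-1}^1 cos (y s) (1 - s²)^n ds`. Differentiating under the
integral sign and integrating by parts gives `P_n' = -y P_{n+1} / (2(n+1))`, so
`(1/y) d/dy` sends `P_n` to `-P_{n+1} / (2(n+1))`; since `P_0(y) = 2 sin y / y`, induction gives
`((1/y) d/dy)^n (sin y / y) = (-1)^n P_n(y) / (2^(n+1) n!)`.
-/

theorem integral_neg_self_eq_zero_of_odd {E : Type*} [NormedAddCommGroup E] [NormedSpace ℝ E]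
    {f : ℝ → E} (hf : ∀ x, f (-x) = -f x) (a : ℝ) : ∫ x in -a..a, f x = 0 := by
  have h := intervalIntegral.integral_comp_neg (a := -a) (b := a) f
  simp only [hf, intervalIntegral.integral_neg, neg_neg] at h
  linear_combination (norm := module) (-(1 / 2 : ℝ)) • h

noncomputable def poissonCosIntegral (n : ℕ) (y : ℝ) : ℝ :=
  ∫ s in (-1 : ℝ)..1, cos (y * s) * (1 - s ^ 2) ^ n

theorem poissonCosIntegral_zero {y : ℝ} (hy : y ≠ 0) :
    poissonCosIntegral 0 y = 2 * (sin y / y) := by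
  simp only [poissonCosIntegral, pow_zero, mul_one]
  rw [intervalIntegral.integral_comp_mul_left (fun x => cos x) hy, integral_cos, mul_neg, mul_one,
    sin_neg]
  simp only [smul_eq_mul]
  ring

theorem integral_mul_sin_mul_one_sub_sq_pow (n : ℕ) (y : ℝ) :
    ∫ s in (-1 : ℝ)..1, s * sin (y * s) * (1 - s ^ 2) ^ n =
      y / (2 * (n + 1)) * poissonCosIntegral (n + 1) y := by
  have hu (s : ℝ) : HasDerivAt (fun s : ℝ => -((1 - s ^ 2) ^ (n + 1) / (2 * (n + 1))))
      (s * (1 - s ^ 2) ^ n) s := by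
    have h : HasDerivAt (fun s : ℝ => 1 - s ^ 2) (-(2 * s)) s := by
      simpa using (hasDerivAt_pow 2 s).const_sub 1
    refine ((h.pow (n + 1)).div_const _).neg.congr_deriv ?_
    push_cast
    field_simp
  have hv (s : ℝ) : HasDerivAt (fun s => sin (y * s)) (cos (y * s) * y) s := by
    simpa using ((hasDerivAt_id s).const_mul y).sin
  have hparts := intervalIntegral.integral_mul_deriv_eq_deriv_mul (a := -1) (b := 1)
    (fun s _ => hu s) (fun s _ => hv s) (by apply Continuous.intervalIntegrable; fun_prop)
    (by apply Continuous.intervalIntegrable; fun_prop)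
  norm_num at hparts
  calc ∫ s in (-1 : ℝ)..1, s * sin (y * s) * (1 - s ^ 2) ^ n
      = ∫ s in (-1 : ℝ)..1, (1 - s ^ 2) ^ (n + 1) / (2 * (n + 1)) * (cos (y * s) * y) := by
        rw [hparts]; congr 1; ext s; ring
    _ = _ := by
        rw [poissonCosIntegral, ← intervalIntegral.integral_const_mul]; congr 1; ext s; field_simp

theorem hasDerivAt_poissonCosIntegral (n : ℕ) (y : ℝ) :
    HasDerivAt (poissonCosIntegral n)
      (-(y / (2 * (n + 1)) * poissonCosIntegral (n + 1) y)) y := by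
  rw [← integral_mul_sin_mul_one_sub_sq_pow, ← intervalIntegral.integral_neg]
  have hcont (x : ℝ) : Continuous fun s : ℝ => cos (x * s) * (1 - s ^ 2) ^ n := by fun_prop
  refine (intervalIntegral.hasDerivAt_integral_of_dominated_loc_of_deriv_le
    (F' := fun x s => -(s * sin (x * s) * (1 - s ^ 2) ^ n)) (bound := fun _ => 1)
    Filter.univ_mem (Filter.Eventually.of_forall fun x =>
      (hcont x).aestronglyMeasurable) ((hcont y).intervalIntegrable _ _)
    (by fun_prop) ?_ intervalIntegrable_const ?_).2
  · refine Filter.Eventually.of_forall fun s hs x _ => ?_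
    rw [uIoc_of_le (by norm_num)] at hs
    have hs1 : |s| ≤ 1 := abs_le.2 ⟨hs.1.le, hs.2⟩
    have hw : |1 - s ^ 2| ≤ 1 := abs_le.2 ⟨by nlinarith [hs.1, hs.2], by nlinarith⟩
    rw [norm_neg, norm_eq_abs, abs_mul, abs_mul, abs_pow]
    exact mul_le_one₀ (mul_le_one₀ hs1 (abs_nonneg _) (abs_sin_le_one _)) (by positivity)
      (pow_le_one₀ (abs_nonneg _) hw)
  · exact Filter.Eventually.of_forall fun s _ x _ =>
      ((hasDerivAt_mul_const s).cos.mul_const _).congr_deriv (by ring)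

open Nat in
theorem rayleighOp_sin_div_eq (n : ℕ) {y : ℝ} (hy : y ≠ 0) :
    rayleighOp n (fun t => sin t / t) y =
      (-1) ^ n / (2 ^ (n + 1) * n !) * poissonCosIntegral n y := by
  induction n generalizing y with
  | zero => simp [rayleighOp, poissonCosIntegral_zero hy]
  | succ n ih =>
    have hloc : rayleighOp n (fun t => sin t / t) =ᶠ[𝓝 y]
        fun z => (-1) ^ n / (2 ^ (n + 1) * n !) * poissonCosIntegral n z :=
      Filter.eventually_of_mem (isOpen_ne.mem_nhds hy) fun z hz => ih hz
    simp only [rayleighOp]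
    rw [hloc.deriv_eq, ((hasDerivAt_poissonCosIntegral n y).const_mul _).deriv,
      Nat.factorial_succ]
    push_cast
    field_simp
    ring

open Nat in
theorem besselJ_nat_add_half (n : ℕ) (y : ℝ) :
    besselJ (n + 1 / 2) y =
      ((y / 2) ^ ((n : ℝ) + 1 / 2) / (n ! * √π) * poissonCosIntegral n y : ℝ) := by
  have hodd : ∫ s in (-1 : ℝ)..1, sin (y * s) * (1 - s ^ 2) ^ n = 0 :=
    integral_neg_self_eq_zero_of_odd (fun s => by rw [mul_neg, sin_neg, neg_sq, neg_mul]) 1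
  have hsplit (s : ℝ) :
      Complex.exp (Complex.I * y * s) * ((1 - s ^ 2) ^ ((n : ℝ) + 1 / 2 - 1 / 2) : ℝ) =
        ((cos (y * s) * (1 - s ^ 2) ^ n : ℝ) : ℂ) +
          ((sin (y * s) * (1 - s ^ 2) ^ n : ℝ) : ℂ) * Complex.I := by
    have harg : Complex.I * y * s = ((y * s : ℝ) : ℂ) * Complex.I := by push_cast; ring
    rw [add_sub_cancel_right, rpow_natCast, harg, Complex.exp_mul_I]
    push_cast
    ring
  have hint : ∫ s in Ioo (-1 : ℝ) 1,
      Complex.exp (Complex.I * y * s) * ((1 - s ^ 2) ^ ((n : ℝ) + 1 / 2 - 1 / 2) : ℝ) =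
        poissonCosIntegral n y := by
    rw [← integral_Ioc_eq_integral_Ioo, ← intervalIntegral.integral_of_le (by norm_num)]
    simp_rw [hsplit]
    rw [intervalIntegral.integral_add (by apply Continuous.intervalIntegrable; fun_prop)
      (by apply Continuous.intervalIntegrable; fun_prop), intervalIntegral.integral_mul_const,
      intervalIntegral.integral_ofReal, intervalIntegral.integral_ofReal, hodd]
    simp [poissonCosIntegral]
  rw [besselJ, hint, add_assoc, add_halves, Gamma_nat_eq_factorial, Gamma_one_half_eq]
  push_cast
  ring

theorem div_two_rpow_nat_add_half (n : ℕ) {y : ℝ} (hy : 0 ≤ y) :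
    (y / 2) ^ ((n : ℝ) + 1 / 2) = √2 * y ^ ((n : ℝ) + 1 / 2) / 2 ^ (n + 1) := by
  rw [div_rpow hy zero_le_two, rpow_add two_pos, rpow_natCast, ← sqrt_eq_rpow]
  field_simp
  rw [pow_succ, mul_assoc, sq_sqrt zero_le_two]

/-- **Lord Rayleigh's formula.**
`J_{n+1/2}(y) = (-1)^n √(2/π) y^{n+1/2} ((1/y) d/dy)^n (sin y / y)` for all `y > 0`. -/
theorem stmt3 (n : ℕ) (y : ℝ) (hy : 0 < y) :
    besselJ ((n : ℝ) + 1 / 2) y =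
      (((-1 : ℝ) ^ n * Real.sqrt (2 / Real.pi) * y ^ ((n : ℝ) + 1 / 2) *
        rayleighOp n (fun t => Real.sin t / t) y : ℝ) : ℂ) := by
  rw [besselJ_nat_add_half, rayleighOp_sin_div_eq n hy.ne', Complex.ofReal_inj,
    div_two_rpow_nat_add_half n hy.le, sqrt_div' _ pi_pos.le]
  field_simp
  rw [← pow_mul, Even.neg_one_pow ⟨n, by ring⟩, mul_one]
end

section
/- Let Ω : ℝᵈ → ℝ₊ be a Lipschitz function with Lipschitz constant C and Ω(0) = 0, and suppose ∫_{ℝᵈ} Ω(x)(1+|x|)^{-γ} dx < ∞ for some γ < d+1. For j ≥ 1 let E_j := B(0, 2^{j+1}) \ B(0, 2^j), E₀ := B(0,1), and λ_j := sup_{E_j} Ω. Then Σ_{j≥0} 2^{-jγ} λ_j^{d+1} < ∞. -/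
/-! The supremum of `Ω` over the compact shell `E_j` is attained at some `x`. As `Ω` is
`C`-Lipschitz, `Ω ≥ Ω x / 2` on the ball of radius `Ω x / (2C)` around `x`; as moreover
`Ω 0 = 0`, this radius is at most `‖x‖ / 2`, so the ball lies in a slightly enlarged shell on which
the weight `(1 + ‖y‖)^{-γ}` is comparable to `2^{-jγ}`. Integrating over the ball gives
`2^{-jγ} λ_j^{d+1} ≲ ∫_{shell} Ω (1 + ‖y‖)^{-γ}`, and the enlarged shells overlap at most three at
a time, so these integrals are summable. -/

open MeasureTheory Real Set Metric Module
open scoped NNReal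

lemma rpow_neg_le_mul_rpow_neg {a b c : ℝ} (γ : ℝ) (ha : 0 < a) (hb : 0 < b)
    (hab : a ≤ c * b) (hba : b ≤ c * a) : a ^ (-γ) ≤ c ^ |γ| * b ^ (-γ) := by
  have hc : 0 < c := pos_of_mul_pos_left (hb.trans_le hba) ha.le
  rcases le_total 0 γ with hγ | hγ
  · have key : c ^ (-γ) * a ^ (-γ) ≤ b ^ (-γ) := by
      rw [← mul_rpow hc.le ha.le]
      exact rpow_le_rpow_of_nonpos hb hba (neg_nonpos.2 hγ)
    rw [abs_of_nonneg hγ]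
    calc a ^ (-γ) = c ^ γ * (c ^ (-γ) * a ^ (-γ)) := by
          rw [← mul_assoc, ← rpow_add hc, add_neg_cancel, rpow_zero, one_mul]
      _ ≤ c ^ γ * b ^ (-γ) := by gcongr
  · rw [abs_of_nonpos hγ, ← mul_rpow hc.le hb.le]
    exact rpow_le_rpow ha.le hab (neg_nonneg.2 hγ)

lemma LipschitzWith.half_le_of_dist_le {X : Type*} [PseudoMetricSpace X] {f : X → ℝ} {K : ℝ≥0}
    (hf : LipschitzWith K f) (hK : 0 < K) {x y : X} (hy : dist y x ≤ f x / (2 * K)) :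
    f x / 2 ≤ f y := by
  have h := (abs_le.1 ((hf.dist_le_mul x y).trans_eq' (Real.dist_eq _ _).symm)).2
  have : (K : ℝ) * dist x y ≤ f x / 2 := by
    rw [dist_comm]
    calc (K : ℝ) * dist y x ≤ K * (f x / (2 * K)) := by gcongr
      _ = f x / 2 := by field_simp
  linarith

section NormedGroup

variable {E : Type*} [SeminormedAddCommGroup E] {Ω : E → ℝ} {K : ℝ≥0}

lemma LipschitzWith.le_mul_norm (hΩ : LipschitzWith K Ω) (h0 : Ω 0 = 0) (x : E) :
    Ω x ≤ K * ‖x‖ := by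
  simpa [h0, Real.dist_eq, dist_zero_right] using (le_abs_self _).trans (hΩ.dist_le_mul x 0)

lemma LipschitzWith.norm_mem_Icc_of_dist_le (hΩ : LipschitzWith K Ω) (hK : 0 < K) (h0 : Ω 0 = 0)
    {x y : E} (hy : dist y x ≤ Ω x / (2 * K)) : ‖y‖ ∈ Icc (‖x‖ / 2) (3 * ‖x‖ / 2) := by
  have hr : Ω x / (2 * K) ≤ ‖x‖ / 2 := by
    rw [div_le_div_iff₀ (by positivity) two_pos]
    nlinarith [hΩ.le_mul_norm h0 x]
  rw [dist_eq_norm] at hy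
  constructor
  · linarith [norm_sub_norm_le x y, norm_sub_rev x y]
  · linarith [norm_sub_norm_le y x]

end NormedGroup

lemma summable_setIntegral_of_disjoint_of_add_le {X : Type*} [MeasurableSpace X] {μ : Measure X}
    {g : X → ℝ} (hg : Integrable g μ) (hg0 : 0 ≤ g) {A : ℕ → Set X}
    (hA : ∀ j, MeasurableSet (A j)) {m : ℕ} (hm : 0 < m)
    (hdisj : ∀ i j, i + m ≤ j → Disjoint (A i) (A j)) :
    Summable fun j => ∫ x in A j, g x ∂μ := by
  refine summable_of_sum_range_le (c := m * ∫ x, g x ∂μ)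
    (fun j => setIntegral_nonneg (hA j) fun x _ => hg0 x) fun n => ?_
  have hsep : ∀ {i j : ℕ}, i % m = j % m → i < j → i + m ≤ j := fun hmod hlt => by
    have := Nat.le_of_dvd (Nat.sub_pos_of_lt hlt) ((Nat.modEq_iff_dvd' hlt.le).1 hmod)
    omega
  have hclass : ∀ k, ∑ j ∈ (Finset.range n).filter (· % m = k), ∫ x in A j, g x ∂μ ≤
      ∫ x, g x ∂μ := by
    intro k
    rw [← integral_biUnion_finset _ (fun j _ => hA j) ?_ fun j _ => hg.integrableOn]
    · exact setIntegral_le_integral hg (.of_forall hg0)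
    intro i hi j hj hij
    simp only [Finset.coe_filter, mem_ofPred_eq] at hi hj
    rcases hij.lt_or_gt with h | h
    · exact hdisj i j (hsep (hi.2.trans hj.2.symm) h)
    · exact (hdisj j i (hsep (hj.2.trans hi.2.symm) h)).symm
  calc ∑ j ∈ Finset.range n, ∫ x in A j, g x ∂μ
      = ∑ k ∈ Finset.range m, ∑ j ∈ (Finset.range n).filter (· % m = k), ∫ x in A j, g x ∂μ :=
        (Finset.sum_fiberwise_of_maps_to (fun j _ => Finset.mem_range.2 (Nat.mod_lt j hm)) _).symm
    _ ≤ ∑ _k ∈ Finset.range m, ∫ x, g x ∂μ := Finset.sum_le_sum fun k _ => hclass k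
    _ = m * ∫ x, g x ∂μ := by simp

section AddHaar

variable {E : Type*} [NormedAddCommGroup E] [NormedSpace ℝ E] [FiniteDimensional ℝ E]
  [MeasurableSpace E] [BorelSpace E] (μ : Measure E) [μ.IsAddHaarMeasure]
  {Ω : E → ℝ} {K : ℝ≥0} (γ : ℝ)

lemma LipschitzWith.pow_mul_weight_le_integral_closedBall (hΩ : LipschitzWith K Ω) (hK : 0 < K)
    (hpos : ∀ x, 0 ≤ Ω x) (h0 : Ω 0 = 0)
    (hint : Integrable (fun y => Ω y * (1 + ‖y‖) ^ (-γ)) μ) (x : E) :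
    Ω x ^ (finrank ℝ E + 1) * (1 + ‖x‖) ^ (-γ) ≤
      2 * 2 ^ |γ| * (2 * K) ^ finrank ℝ E / μ.real (ball 0 1) *
        ∫ y in closedBall x (Ω x / (2 * K)), Ω y * (1 + ‖y‖) ^ (-γ) ∂μ := by
  set r := Ω x / (2 * K)
  have hr : 0 ≤ r := div_nonneg (hpos x) (by positivity)
  have hV : 0 < μ.real (ball 0 1) := by
    rw [measureReal_def]
    exact ENNReal.toReal_pos (measure_ball_pos μ 0 one_pos).ne' measure_ball_lt_top.ne
  have hlower : ∀ y ∈ closedBall x r,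
      Ω x / 2 * ((1 + ‖x‖) ^ (-γ) / 2 ^ |γ|) ≤ Ω y * (1 + ‖y‖) ^ (-γ) := by
    intro y hy
    obtain ⟨h1, h2⟩ := hΩ.norm_mem_Icc_of_dist_le hK h0 hy
    gcongr
    · exact hpos y
    · exact hΩ.half_le_of_dist_le hK hy
    · rw [div_le_iff₀' (by positivity)]
      exact rpow_neg_le_mul_rpow_neg γ (by positivity) (by positivity) (by linarith) (by linarith)
  have hball := setIntegral_ge_of_const_le_real measurableSet_closedBall
    measure_closedBall_lt_top.ne hlower hint.integrableOn
  rw [Measure.addHaar_real_closedBall μ x hr] at hball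
  refine le_of_eq_of_le ?_ (mul_le_mul_of_nonneg_left hball (by positivity))
  simp only [r, div_pow]
  field_simp
  ring

lemma LipschitzWith.rpow_mul_sSup_pow_le_integral_annulus (hΩ : LipschitzWith K Ω) (hK : 0 < K)
    (hpos : ∀ x, 0 ≤ Ω x) (h0 : Ω 0 = 0)
    (hint : Integrable (fun y => Ω y * (1 + ‖y‖) ^ (-γ)) μ) (j : ℕ) {S : Set E}
    (hS : IsCompact S) (hSj : S ⊆ closedBall 0 (2 ^ (j + 1)) \ ball 0 (2 ^ j)) :
    (2 : ℝ) ^ (-(j : ℝ) * γ) * sSup (Ω '' S) ^ (finrank ℝ E + 1) ≤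
      4 ^ |γ| * (2 * 2 ^ |γ| * (2 * K) ^ finrank ℝ E / μ.real (ball 0 1)) *
        ∫ y in ball 0 (2 ^ (j + 2)) \ ball 0 (2 ^ j / 2), Ω y * (1 + ‖y‖) ^ (-γ) ∂μ := by
  have hg0 : ∀ y, 0 ≤ Ω y * (1 + ‖y‖) ^ (-γ) := fun y => mul_nonneg (hpos y) (by positivity)
  rcases S.eq_empty_or_nonempty with rfl | hne
  · rw [image_empty, Real.sSup_empty, zero_pow (Nat.succ_ne_zero _), mul_zero]
    exact mul_nonneg (by positivity)
      (setIntegral_nonneg (measurableSet_ball.diff measurableSet_ball) fun y _ => hg0 y)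
  obtain ⟨x, hxS, hx⟩ :=
    (hS.image_of_continuousOn hΩ.continuous.continuousOn).sSup_mem (hne.image Ω)
  have hxj := hSj hxS
  simp only [mem_sdiff, mem_closedBall, mem_ball, dist_zero_right, not_lt] at hxj
  have hweight : (2 : ℝ) ^ (-(j : ℝ) * γ) ≤ 4 ^ |γ| * (1 + ‖x‖) ^ (-γ) := by
    have h2j : (1 : ℝ) ≤ 2 ^ j := one_le_pow₀ one_le_two
    calc (2 : ℝ) ^ (-(j : ℝ) * γ) = ((2 : ℝ) ^ j) ^ (-γ) := by
          rw [← rpow_natCast, ← rpow_mul zero_le_two, neg_mul_comm]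
      _ ≤ 4 ^ |γ| * (1 + ‖x‖) ^ (-γ) := by
          refine rpow_neg_le_mul_rpow_neg γ (by positivity) (by positivity) (by linarith) ?_
          rw [pow_succ] at hxj
          linarith
  have hsub : closedBall x (Ω x / (2 * K)) ⊆ ball 0 (2 ^ (j + 2)) \ ball 0 (2 ^ j / 2) := by
    intro y hy
    obtain ⟨h1, h2⟩ := hΩ.norm_mem_Icc_of_dist_le hK h0 (mem_closedBall.1 hy)
    simp only [mem_sdiff, mem_ball, dist_zero_right, not_lt, pow_succ] at hxj ⊢
    constructor <;> nlinarith [pow_pos (two_pos (α := ℝ)) j]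
  calc (2 : ℝ) ^ (-(j : ℝ) * γ) * sSup (Ω '' S) ^ (finrank ℝ E + 1)
      ≤ 4 ^ |γ| * (Ω x ^ (finrank ℝ E + 1) * (1 + ‖x‖) ^ (-γ)) := by
        rw [← hx, mul_left_comm, mul_comm]
        exact mul_le_mul_of_nonneg_left hweight (pow_nonneg (hpos x) _)
    _ ≤ _ := by
        rw [mul_assoc]
        refine mul_le_mul_of_nonneg_left ?_ (by positivity)
        refine (hΩ.pow_mul_weight_le_integral_closedBall μ γ hK hpos h0 hint x).trans ?_
        exact mul_le_mul_of_nonneg_left (setIntegral_mono_set hint.integrableOn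
          (.of_forall fun y => hg0 y) hsub.eventuallyLE) (by positivity)

end AddHaar

theorem stmt12_general (d : ℕ) (γ : ℝ)
    (Ω : EuclideanSpace ℝ (Fin d) → ℝ) (C : ℝ) (hC : 0 < C)
    (hpos : ∀ x, 0 ≤ Ω x) (hLip : ∀ x y, |Ω x - Ω y| ≤ C * ‖x - y‖) (h0 : Ω 0 = 0)
    (hint : Integrable (fun x => Ω x * (1 + ‖x‖) ^ (-γ)) volume)
    (E : ℕ → Set (EuclideanSpace ℝ (Fin d)))
    (hEj : ∀ j : ℕ, 1 ≤ j → E j = closedBall 0 (2 ^ (j + 1)) \ ball 0 (2 ^ j))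
    (lam : ℕ → ℝ) (hlam : ∀ j, lam j = sSup (Ω '' E j)) :
    Summable (fun j : ℕ => (2 : ℝ) ^ (-(j : ℝ) * γ) * lam j ^ (d + 1)) := by
  have hK : 0 < C.toNNReal := Real.toNNReal_pos.2 hC
  have hΩ : LipschitzWith C.toNNReal Ω := .of_dist_le_mul fun x y => by
    rw [Real.coe_toNNReal C hC.le, Real.dist_eq, dist_eq_norm]
    exact hLip x y
  have hannuli : Summable fun j : ℕ =>
      ∫ y in ball 0 (2 ^ (j + 2)) \ ball 0 (2 ^ j / 2), Ω y * (1 + ‖y‖) ^ (-γ) := by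
    refine summable_setIntegral_of_disjoint_of_add_le hint
      (fun y => mul_nonneg (hpos y) (by positivity))
      (fun j => measurableSet_ball.diff measurableSet_ball) three_pos fun i j hij => ?_
    have hr : (2 : ℝ) ^ (i + 2) ≤ 2 ^ j / 2 := by
      rw [le_div_iff₀ two_pos, ← pow_succ]
      exact pow_le_pow_right₀ one_le_two (by omega)
    exact disjoint_sdiff_right.mono_left (sdiff_subset.trans (ball_subset_ball hr))
  have hcompact : ∀ j, IsCompact (E (j + 1)) := fun j =>
    hEj (j + 1) j.succ_pos ▸ (isCompact_closedBall _ _).diff isOpen_ball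
  have hbound := fun j => hΩ.rpow_mul_sSup_pow_le_integral_annulus volume γ hK hpos h0 hint
    (j + 1) (hcompact j) (hEj (j + 1) j.succ_pos).subset
  simp only [finrank_euclideanSpace_fin, ← hlam] at hbound
  rw [← summable_nat_add_iff 1]
  refine .of_nonneg_of_le (fun j => mul_nonneg (by positivity) (pow_nonneg ?_ _)) hbound
    (((summable_nat_add_iff 1).2 hannuli).mul_left _)
  rw [hlam]
  exact Real.sSup_nonneg (by rintro _ ⟨y, -, rfl⟩; exact hpos y)

/-- If `Ω : ℝᵈ → ℝ₊` is `C`-Lipschitz with `Ω 0 = 0` and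
`∫ Ω(x)(1+|x|)^{-γ} dx < ∞` for some `γ < d+1`, then with `E₀ = B(0,1)`,
`E_j = B(0,2^{j+1}) \ B(0,2^j)` and `λ_j = sup_{E_j} Ω`, one has
`Σ_j 2^{-jγ} λ_j^{d+1} < ∞`. -/
theorem stmt12 (d : ℕ) (hd : 1 ≤ d) (γ : ℝ) (hγ : γ < (d : ℝ) + 1)
    (Ω : EuclideanSpace ℝ (Fin d) → ℝ) (C : ℝ) (hC : 0 < C)
    (hpos : ∀ x, 0 ≤ Ω x) (hLip : ∀ x y, |Ω x - Ω y| ≤ C * ‖x - y‖) (h0 : Ω 0 = 0)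
    (hint : Integrable (fun x => Ω x * (1 + ‖x‖) ^ (-γ)) volume)
    (E : ℕ → Set (EuclideanSpace ℝ (Fin d)))
    (hE0 : E 0 = closedBall 0 1)
    (hEj : ∀ j : ℕ, 1 ≤ j → E j = closedBall 0 (2 ^ (j + 1)) \ ball 0 (2 ^ j))
    (lam : ℕ → ℝ) (hlam : ∀ j, lam j = sSup (Ω '' E j)) :
    Summable (fun j : ℕ => (2 : ℝ) ^ (-(j : ℝ) * γ) * lam j ^ (d + 1)) :=
  stmt12_general d γ Ω C hC hpos hLip h0 hint E hEj lam hlam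
end

section
/- Let Ω : ℝᵈ → ℝ₊ be Lipschitz with Ω(0) = 0 and ∫_{ℝᵈ} Ω(x)(1+|x|)^{-γ} dx < ∞ for some γ < d+1. Define Ω₁(x) := λ_j for x in the dyadic annulus E_j (where λ_j := sup_{E_j} Ω, E₀ := B(0,1), E_j := B(0,2^{j+1}) \ B(0,2^j) for j ≥ 1). Then Ω ≤ Ω₁ pointwise and ∫_{ℝᵈ} Ω₁(x)(1+|x|²)^{-(d+1)/2} dx < ∞. -/
/-!
On the ball of radius `Ω x / (2C)` around `x` we have `Ω ≥ Ω x / 2` and `1 + ‖y‖ ≤ 2 (1 + ‖x‖)`,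
so integrating `Ω (1 + ‖y‖)^(-γ)` over it gives `Ω x ^ (d + 1) ≲ (1 + ‖x‖) ^ γ` (for `γ ≥ 0`;
a negative `γ` can be replaced by `0`). Hence `Ω x ≲ (1 + ‖x‖) ^ β` with `β = γ / (d + 1) < 1`.
As `1 + ‖x‖` varies by at most a factor `3` over a dyadic annulus, `Ω₁` obeys the same bound,
and `(1 + ‖x‖) ^ β (1 + ‖x‖²) ^ (-(d + 1) / 2)` is integrable since `d + 1 - β > d`.
`Ω₁` is not assumed measurable, but off the null union of the spheres `‖x‖ = 2 ^ (j + 1)` it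
equals `x ↦ λ ⌊log₂ ‖x‖⌋`.
-/
open MeasureTheory Real Set Metric Module
open scoped NNReal

section DyadicAnnulus

variable {E : Type*} [NormedAddCommGroup E]

def dyadicAnnulus (j : ℕ) : Set E :=
  if j = 0 then closedBall 0 2 else closedBall 0 (2 ^ (j + 1)) \ ball 0 (2 ^ j)

variable {x : E} {j : ℕ}

theorem norm_le_of_mem_dyadicAnnulus (hx : x ∈ dyadicAnnulus j) : ‖x‖ ≤ 2 ^ (j + 1) := by
  unfold dyadicAnnulus at hx
  split_ifs at hx with hj
  · subst hj; simpa using hx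
  · simpa using hx.1

theorem two_pow_le_one_add_norm_of_mem_dyadicAnnulus (hx : x ∈ dyadicAnnulus j) :
    (2 : ℝ) ^ j ≤ 1 + ‖x‖ := by
  unfold dyadicAnnulus at hx
  split_ifs at hx with hj
  · simp [hj]
  · have : (2 : ℝ) ^ j ≤ ‖x‖ := by simpa using hx.2
    linarith [norm_nonneg x]

theorem natFloor_logb_norm_of_mem_dyadicAnnulus (hx : x ∈ dyadicAnnulus j)
    (hne : ‖x‖ ≠ 2 ^ (j + 1)) : ⌊logb 2 ‖x‖⌋₊ = j := by
  have hlt : ‖x‖ < 2 ^ (j + 1) := (norm_le_of_mem_dyadicAnnulus hx).lt_of_ne hne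
  unfold dyadicAnnulus at hx
  split_ifs at hx with hj
  · subst hj
    rcases (norm_nonneg x).eq_or_lt with h0 | h0
    · simp [← h0]
    · rw [Nat.floor_eq_zero, logb_lt_iff_lt_rpow one_lt_two h0]
      simpa using hlt
  · have hge : (2 : ℝ) ^ j ≤ ‖x‖ := by simpa using hx.2
    have h0 : 0 < ‖x‖ := lt_of_lt_of_le (by positivity) hge
    rw [Nat.floor_eq_iff (logb_nonneg one_lt_two ((one_le_pow₀ one_le_two).trans hge)),
      le_logb_iff_rpow_le one_lt_two h0, logb_lt_iff_lt_rpow one_lt_two h0]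
    exact ⟨by simpa using hge, by exact_mod_cast hlt⟩

theorem mem_upperBounds_image_dyadicAnnulus {f : E → ℝ} {A β : ℝ} (hA : 0 ≤ A) (hβ : 0 ≤ β)
    (hf : ∀ y, f y ≤ A * (1 + ‖y‖) ^ β) (hx : x ∈ dyadicAnnulus j) :
    3 ^ β * A * (1 + ‖x‖) ^ β ∈ upperBounds (f '' dyadicAnnulus j) := by
  have hj : (1 : ℝ) ≤ 2 ^ j := one_le_pow₀ one_le_two
  have hx' := two_pow_le_one_add_norm_of_mem_dyadicAnnulus hx
  rintro _ ⟨y, hy, rfl⟩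
  calc f y ≤ A * (1 + ‖y‖) ^ β := hf y
    _ ≤ A * (3 * (1 + ‖x‖)) ^ β := by
        gcongr
        linarith [norm_le_of_mem_dyadicAnnulus hy, pow_succ (2 : ℝ) j]
    _ = 3 ^ β * A * (1 + ‖x‖) ^ β := by rw [mul_rpow (by norm_num) (by positivity)]; ring

end DyadicAnnulus

variable {E : Type*} [NormedAddCommGroup E] [NormedSpace ℝ E] [FiniteDimensional ℝ E]
  [MeasurableSpace E] [BorelSpace E] {μ : Measure E} [μ.IsAddHaarMeasure]

namespace LipschitzWith

variable {f : E → ℝ} {K : ℝ≥0}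

theorem exists_pow_finrank_succ_le (hf : LipschitzWith K f) (hf0 : f 0 = 0)
    (hpos : ∀ x, 0 ≤ f x) {γ : ℝ} (hγ : 0 ≤ γ)
    (hint : Integrable (fun x => f x * (1 + ‖x‖) ^ (-γ)) μ) :
    ∃ M, ∀ x, f x ^ (finrank ℝ E + 1) ≤ M * (1 + ‖x‖) ^ γ := by
  set d := finrank ℝ E
  set I := ∫ x, f x * (1 + ‖x‖) ^ (-γ) ∂μ
  set V := μ.real (closedBall (0 : E) 1)
  have hV : 0 < V :=
    ENNReal.toReal_pos (measure_closedBall_pos μ 0 one_pos).ne' measure_closedBall_lt_top.ne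
  have hI : 0 ≤ I := integral_nonneg fun x => mul_nonneg (hpos x) (by positivity)
  refine ⟨2 * (2 * K) ^ d * 2 ^ γ * I / V, fun x => ?_⟩
  rcases (hpos x).eq_or_lt with ha | ha
  · rw [← ha, zero_pow d.succ_ne_zero]
    positivity
  have hax : f x ≤ K * ‖x‖ := by
    simpa [hf0, abs_of_nonneg (hpos x)] using hf.dist_le_mul x 0
  have hK : (0 : ℝ) < K := pos_of_mul_pos_left (ha.trans_le hax) (norm_nonneg x)
  set r := f x / (2 * K) with hr
  set w := (2 * (1 + ‖x‖)) ^ γ with hw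
  have hball : ∀ y ∈ closedBall x r, f x / 2 / w ≤ f y * (1 + ‖y‖) ^ (-γ) := by
    intro y hy
    rw [mem_closedBall, dist_eq_norm] at hy
    have hKr : K * r = f x / 2 := by rw [hr]; field_simp
    have hfy : f x / 2 ≤ f y := by
      have hdist := hf.dist_le_mul x y
      rw [Real.dist_eq, dist_eq_norm, norm_sub_rev] at hdist
      linarith [le_abs_self (f x - f y), mul_le_mul_of_nonneg_left hy hK.le]
    have hy' : 1 + ‖y‖ ≤ 2 * (1 + ‖x‖) := by
      have hrx : r ≤ ‖x‖ / 2 := by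
        rw [hr, div_le_iff₀ (by positivity)]; linarith
      linarith [norm_le_norm_add_norm_sub' y x, norm_nonneg x]
    rw [rpow_neg (by positivity), div_eq_mul_inv, hw]
    gcongr
    linarith
  have hlow : f x / 2 / w * (r ^ d * V) ≤ I := by
    rw [← Measure.addHaar_real_closedBall' μ x (by positivity), mul_comm, ← smul_eq_mul]
    exact (setIntegral_ge_of_const_le measurableSet_closedBall measure_closedBall_lt_top.ne
      hball hint.integrableOn).trans
      (setIntegral_le_integral hint (.of_forall fun y => mul_nonneg (hpos y) (by positivity)))
  calc f x ^ (d + 1)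
      = f x / 2 / w * (r ^ d * V) * (2 * (2 * K) ^ d * w / V) := by
        rw [hr, div_pow]; field_simp [(show 0 < w by positivity).ne']; ring
    _ ≤ I * (2 * (2 * K) ^ d * w / V) := by gcongr
    _ = 2 * (2 * K) ^ d * 2 ^ γ * I / V * (1 + ‖x‖) ^ γ := by
        rw [hw, mul_rpow (by norm_num) (by positivity)]; ring

theorem exists_le_mul_one_add_norm_rpow (hf : LipschitzWith K f) (hf0 : f 0 = 0)
    (hpos : ∀ x, 0 ≤ f x) {γ : ℝ} (hγ : γ < finrank ℝ E + 1)
    (hint : Integrable (fun x => f x * (1 + ‖x‖) ^ (-γ)) μ) :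
    ∃ A β : ℝ, 0 ≤ A ∧ 0 ≤ β ∧ β < 1 ∧ ∀ x, f x ≤ A * (1 + ‖x‖) ^ β := by
  set n := finrank ℝ E + 1
  have hn : (0 : ℝ) < n := by positivity
  have hint' : Integrable (fun x => f x * (1 + ‖x‖) ^ (-max γ 0)) μ := by
    have hw : Continuous fun x : E => (1 + ‖x‖) ^ (-max γ 0) :=
      (continuous_const.add continuous_norm).rpow_const
        fun x => .inl (by positivity : (0 : ℝ) < 1 + ‖x‖).ne'
    refine hint.mono' (hf.continuous.mul hw).aestronglyMeasurable (.of_forall fun x => ?_)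
    rw [norm_of_nonneg (mul_nonneg (hpos x) (by positivity))]
    gcongr
    exacts [hpos x, le_add_of_nonneg_right (norm_nonneg x), le_max_left γ 0]
  obtain ⟨M, hM⟩ := hf.exists_pow_finrank_succ_le hf0 hpos (le_max_right γ 0) hint'
  have hM0 : 0 ≤ M := by simpa [hf0, n] using hM 0
  refine ⟨M ^ (n⁻¹ : ℝ), max γ 0 / n, by positivity, by positivity,
    (div_lt_one hn).2 (max_lt (by exact_mod_cast hγ) (by positivity)), fun x => ?_⟩
  calc f x = (f x ^ n) ^ (n⁻¹ : ℝ) :=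
        (pow_rpow_inv_natCast (hpos x) (Nat.succ_ne_zero _)).symm
    _ ≤ (M * (1 + ‖x‖) ^ max γ 0) ^ (n⁻¹ : ℝ) :=
        rpow_le_rpow (pow_nonneg (hpos x) _) (hM x) (by positivity)
    _ = M ^ (n⁻¹ : ℝ) * (1 + ‖x‖) ^ (max γ 0 / n) := by
        rw [mul_rpow hM0 (by positivity), ← rpow_mul (by positivity), div_eq_mul_inv]

end LipschitzWith

theorem aestronglyMeasurable_of_forall_mem_dyadicAnnulus {g : E → ℝ} {c : ℕ → ℝ}
    (hg : ∀ x, ∃ j, x ∈ dyadicAnnulus j ∧ g x = c j) : AEStronglyMeasurable g μ := by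
  have hnull : μ (⋃ k : ℕ, sphere (0 : E) (2 ^ (k + 1))) = 0 :=
    measure_iUnion_null fun k => Measure.addHaar_sphere_of_ne_zero μ _ (by positivity)
  have hmeas : Measurable fun x : E => c ⌊logb 2 ‖x‖⌋₊ :=
    measurable_from_nat.comp ((measurable_log.comp measurable_norm).div_const _).nat_floor
  refine hmeas.aestronglyMeasurable.congr ?_
  filter_upwards [measure_eq_zero_iff_ae_notMem.mp hnull] with x hx
  obtain ⟨j, hxj, hgx⟩ := hg x
  rw [hgx, natFloor_logb_norm_of_mem_dyadicAnnulus hxj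
    fun h => hx (mem_iUnion.2 ⟨j, by simpa using h⟩)]

theorem integrable_mul_one_add_norm_sq_rpow {g : E → ℝ} (hg : AEStronglyMeasurable g μ)
    {A β : ℝ} (hβ : β < 1) (hbound : ∀ x, ‖g x‖ ≤ A * (1 + ‖x‖) ^ β) :
    Integrable (fun x => g x * (1 + ‖x‖ ^ 2) ^ (-((finrank ℝ E : ℝ) + 1) / 2)) μ := by
  set s : ℝ := finrank ℝ E + 1
  have hs : 0 < s := by positivity
  have hw : Continuous fun x : E => (1 + ‖x‖ ^ 2) ^ (-s / 2) :=
    (continuous_const.add (continuous_norm.pow 2)).rpow_const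
      fun x => .inl (by positivity : (0 : ℝ) < 1 + ‖x‖ ^ 2).ne'
  refine ((integrable_one_add_norm (r := s - β) (by linarith)).const_mul (A * 2 ^ (s / 2))).mono'
    (hg.mul hw.aestronglyMeasurable) (.of_forall fun x => ?_)
  have h1 : (0 : ℝ) < 1 + ‖x‖ := by positivity
  calc ‖g x * (1 + ‖x‖ ^ 2) ^ (-s / 2)‖
      = ‖g x‖ * (1 + ‖x‖ ^ 2) ^ (-s / 2) := by
        rw [norm_mul, norm_of_nonneg (by positivity : (0 : ℝ) ≤ (1 + ‖x‖ ^ 2) ^ (-s / 2))]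
    _ ≤ A * (1 + ‖x‖) ^ β * (2 ^ (s / 2) * (1 + ‖x‖) ^ (-s)) :=
        mul_le_mul (hbound x) (rpow_neg_one_add_norm_sq_le x hs) (by positivity)
          ((norm_nonneg _).trans (hbound x))
    _ = A * 2 ^ (s / 2) * (1 + ‖x‖) ^ (-(s - β)) := by
        rw [neg_sub, sub_eq_add_neg, rpow_add h1]; ring


theorem stmt14_general (d : ℕ) (γ : ℝ) (hγ : γ < (d : ℝ) + 1)
    (Ω : EuclideanSpace ℝ (Fin d) → ℝ) (C : ℝ)
    (hpos : ∀ x, 0 ≤ Ω x) (hLip : ∀ x y, |Ω x - Ω y| ≤ C * ‖x - y‖) (h0 : Ω 0 = 0)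
    (hint : Integrable (fun x => Ω x * (1 + ‖x‖) ^ (-γ)) volume)
    (E : ℕ → Set (EuclideanSpace ℝ (Fin d)))
    (hE0 : E 0 = closedBall 0 2)
    (hEj : ∀ j : ℕ, 1 ≤ j → E j = closedBall 0 (2 ^ (j + 1)) \ ball 0 (2 ^ j))
    (lam : ℕ → ℝ) (hlam : ∀ j, lam j = sSup (Ω '' E j))
    (Ω₁ : EuclideanSpace ℝ (Fin d) → ℝ)
    (hΩ₁ : ∀ x, ∃ j : ℕ, x ∈ E j ∧ Ω₁ x = lam j) :
    (∀ x, Ω x ≤ Ω₁ x) ∧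
      Integrable (fun x => Ω₁ x * (1 + ‖x‖ ^ 2) ^ (-((d : ℝ) + 1) / 2)) volume := by
  obtain rfl : E = dyadicAnnulus := funext fun
    | 0 => hE0
    | j + 1 => by rw [hEj (j + 1) j.succ_pos, dyadicAnnulus, if_neg j.succ_ne_zero]
  have hΩ : LipschitzWith C.toNNReal Ω := .of_dist_le_mul fun x y => by
    rw [Real.dist_eq, dist_eq_norm, coe_toNNReal']
    exact (hLip x y).trans (by gcongr; exact le_max_left C 0)
  obtain ⟨A, β, hA, hβ0, hβ1, hΩA⟩ :=
    hΩ.exists_le_mul_one_add_norm_rpow h0 hpos (by simpa using hγ) hint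
  have hΩ₁_bounds : ∀ x, Ω x ≤ Ω₁ x ∧ Ω₁ x ≤ 3 ^ β * A * (1 + ‖x‖) ^ β := fun x => by
    obtain ⟨j, hxj, hx⟩ := hΩ₁ x
    have hub := mem_upperBounds_image_dyadicAnnulus hA hβ0 hΩA hxj
    rw [hx, hlam]
    exact ⟨le_csSup ⟨_, hub⟩ (mem_image_of_mem Ω hxj), csSup_le ⟨_, mem_image_of_mem Ω hxj⟩ hub⟩
  refine ⟨fun x => (hΩ₁_bounds x).1, ?_⟩
  simpa using integrable_mul_one_add_norm_sq_rpow (μ := volume)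
    (aestronglyMeasurable_of_forall_mem_dyadicAnnulus hΩ₁) hβ1 fun x => by
      rw [norm_of_nonneg ((hpos x).trans (hΩ₁_bounds x).1)]
      exact (hΩ₁_bounds x).2

/-- Under the hypotheses of Statement 12, the piecewise-constant radial
majorant `Ω₁` (equal to `λ_j = sup_{E_j} Ω` on the dyadic annulus `E_j`) satisfies
`Ω ≤ Ω₁` pointwise and `∫ Ω₁(x)(1+|x|²)^{-(d+1)/2} dx < ∞`. -/
theorem stmt14 (d : ℕ) (hd : 1 ≤ d) (γ : ℝ) (hγ : γ < (d : ℝ) + 1)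
    (Ω : EuclideanSpace ℝ (Fin d) → ℝ) (C : ℝ) (hC : 0 < C)
    (hpos : ∀ x, 0 ≤ Ω x) (hLip : ∀ x y, |Ω x - Ω y| ≤ C * ‖x - y‖) (h0 : Ω 0 = 0)
    (hint : Integrable (fun x => Ω x * (1 + ‖x‖) ^ (-γ)) volume)
    (E : ℕ → Set (EuclideanSpace ℝ (Fin d)))
    (hE0 : E 0 = closedBall 0 2)
    (hEj : ∀ j : ℕ, 1 ≤ j → E j = closedBall 0 (2 ^ (j + 1)) \ ball 0 (2 ^ j))
    (lam : ℕ → ℝ) (hlam : ∀ j, lam j = sSup (Ω '' E j))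
    (Ω₁ : EuclideanSpace ℝ (Fin d) → ℝ)
    (hΩ₁ : ∀ x, ∃ j : ℕ, x ∈ E j ∧ Ω₁ x = lam j) :
    (∀ x, Ω x ≤ Ω₁ x) ∧
      Integrable (fun x => Ω₁ x * (1 + ‖x‖ ^ 2) ^ (-((d : ℝ) + 1) / 2)) volume :=
  stmt14_general d γ hγ Ω C hpos hLip h0 hint E hE0 hEj lam hlam Ω₁ hΩ₁
end
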